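/- Let G be a simple graph on n vertices with adjacency matrix A, and suppose the smallest eigenvalue τ₁ of A satisfies τ₁ < -1. Let b = τ₁/(τ₁+1) and M = A + b(J - I - A). Then M has zero diagonal, positive off-diagonal entries, and PMP is negative semidefinite, where P = I - (1/n)J; hence M is a Euclidean distance matrix. -/

import Mathlib

/-!
Since `(b - 1) τ₁ = -b`, we have `-M = (b - 1) (A - τ₁ I) - b J` with `b - 1 > 0`. The matrix
`A - τ₁ I` is positive semidefinite because `τ₁` is the least eigenvalue, and the centering matrix
`P` annihilates `J`, so `-PMP = P ((b - 1) (A - τ₁ I)) P` is positive semidefinite. The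
off-diagonal entries of `M` are `1` on edges and `b > 0` on non-edges.

The embedding is Schoenberg's: write `-PMP / 2` as the Gram matrix of vectors `x i`. Since
`e = eᵢ - eⱼ` has coordinate sum zero, `P e = e`, hence
`‖x i - x j‖² = -½ eᵀ (PMP) e = -½ eᵀ M e = M i j`.
-/

open Matrix

open scoped MatrixOrder in
lemma Matrix.PosSemidef.exists_eq_gram {ι : Type*} [Fintype ι] {G : Matrix ι ι ℝ}
    (hG : G.PosSemidef) : ∃ x : ι → EuclideanSpace ℝ ι, G = gram ℝ x := by
  classical
  obtain ⟨S, hS, rfl⟩ : ∃ S : Matrix ι ι ℝ, S.IsHermitian ∧ S * S = G :=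
    ⟨CFC.sqrt G, (nonneg_iff_posSemidef.mp (CFC.sqrt_nonneg G)).isHermitian,
      CFC.sqrt_mul_sqrt_self G hG.nonneg⟩
  refine ⟨fun i => WithLp.toLp 2 (S i), ?_⟩
  ext i j
  simp only [mul_apply, gram_apply, PiLp.inner_apply, RCLike.inner_apply, conj_trivial]
  refine Finset.sum_congr rfl fun k _ => ?_
  rw [← hS.apply k j, star_trivial, mul_comm]

lemma single_sub_single_dotProduct_mulVec {ι : Type*} [Fintype ι] [DecidableEq ι]
    (N : Matrix ι ι ℝ) (i j : ι) :
    (Pi.single i 1 - Pi.single j 1) ⬝ᵥ N *ᵥ (Pi.single i 1 - Pi.single j 1) =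
      N i i + N j j - N i j - N j i := by
  simp only [mulVec_sub, mulVec_single, MulOpposite.op_one, one_smul, dotProduct_sub,
    sub_dotProduct, single_dotProduct, col_apply, one_mul]
  ring

section Centering

variable {ι : Type*} [Fintype ι] [DecidableEq ι]

variable (ι) in
noncomputable def centeringMatrix : Matrix ι ι ℝ :=
  1 - (Fintype.card ι : ℝ)⁻¹ • of fun _ _ => 1

lemma centeringMatrix_apply (i j : ι) :
    centeringMatrix ι i j = (1 : Matrix ι ι ℝ) i j - (Fintype.card ι : ℝ)⁻¹ := by
  simp [centeringMatrix]

lemma centeringMatrix_mul_allOnes : centeringMatrix ι * of (fun _ _ => (1 : ℝ)) = 0 := by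
  ext i j
  have : Nonempty ι := ⟨i⟩
  simp [mul_apply, centeringMatrix_apply, Finset.sum_sub_distrib, one_apply]

lemma transpose_centeringMatrix : (centeringMatrix ι)ᵀ = centeringMatrix ι := by
  ext i j
  simp [centeringMatrix_apply, one_apply, eq_comm]

lemma centeringMatrix_mulVec_of_sum_eq_zero {v : ι → ℝ} (hv : ∑ i, v i = 0) :
    centeringMatrix ι *ᵥ v = v := by
  ext i
  simp [mulVec, dotProduct, centeringMatrix_apply, sub_mul, Finset.sum_sub_distrib,
    ← Finset.mul_sum, hv, one_apply]

lemma dotProduct_centeringMatrix_mul_mul_centeringMatrix_mulVec (D : Matrix ι ι ℝ) {v : ι → ℝ}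
    (hv : ∑ i, v i = 0) :
    v ⬝ᵥ (centeringMatrix ι * D * centeringMatrix ι) *ᵥ v = v ⬝ᵥ D *ᵥ v := by
  rw [← mulVec_mulVec, ← mulVec_mulVec, dotProduct_mulVec, ← mulVec_transpose,
    transpose_centeringMatrix, centeringMatrix_mulVec_of_sum_eq_zero hv]

lemma posSemidef_centeringMatrix_mul_mul {N : Matrix ι ι ℝ} (hN : N.PosSemidef) :
    (centeringMatrix ι * N * centeringMatrix ι).PosSemidef := by
  simpa [conjTranspose_eq_transpose_of_trivial, transpose_centeringMatrix] using
    hN.conjTranspose_mul_mul_same (centeringMatrix ι)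

lemma centeringMatrix_mul_add_smul_allOnes_mul (N : Matrix ι ι ℝ) (c : ℝ) :
    centeringMatrix ι * (N + c • of fun _ _ => 1) * centeringMatrix ι =
      centeringMatrix ι * N * centeringMatrix ι := by
  rw [mul_add, Matrix.mul_smul, centeringMatrix_mul_allOnes, smul_zero, add_zero]

theorem exists_dist_sq_eq_of_posSemidef_neg_centeringMatrix_mul_mul {D : Matrix ι ι ℝ}
    (hDsymm : Dᵀ = D) (hDdiag : ∀ i, D i i = 0)
    (hD : (-(centeringMatrix ι * D * centeringMatrix ι)).PosSemidef) :
    ∃ x : ι → EuclideanSpace ℝ ι, ∀ i j, D i j = dist (x i) (x j) ^ 2 := by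
  obtain ⟨x, hx⟩ := (hD.smul (by norm_num : (0 : ℝ) ≤ 2⁻¹)).exists_eq_gram
  refine ⟨x, fun i j => ?_⟩
  set e : ι → ℝ := Pi.single i 1 - Pi.single j 1
  have he : ∑ k, e k = 0 := by simp [e, Finset.sum_sub_distrib]
  have hex : ∑ k, e k • x k = x i - x j := by
    simp [e, sub_smul, Finset.sum_sub_distrib]
  calc D i j = -(2 : ℝ)⁻¹ * (D i i + D j j - D i j - D j i) := by
        rw [hDdiag, hDdiag, ← transpose_apply D i j, hDsymm]; ring
    _ = star e ⬝ᵥ ((2 : ℝ)⁻¹ • -(centeringMatrix ι * D * centeringMatrix ι)) *ᵥ e := by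
        rw [star_trivial, smul_mulVec, dotProduct_smul, neg_mulVec, dotProduct_neg,
          dotProduct_centeringMatrix_mul_mul_centeringMatrix_mulVec D he,
          single_sub_single_dotProduct_mulVec, smul_eq_mul, neg_mul_comm]
    _ = dist (x i) (x j) ^ 2 := by
        rw [hx, star_dotProduct_gram_mulVec, hex, real_inner_self_eq_norm_sq, dist_eq_norm]

end Centering

open scoped MatrixOrder in
lemma Matrix.IsHermitian.posSemidef_sub_smul_one {ι : Type*} [Fintype ι] [DecidableEq ι]
    {A : Matrix ι ι ℝ} (hA : A.IsHermitian) {τ : ℝ}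
    (hτ : ∀ μ : ℝ, (∃ w ≠ 0, A *ᵥ w = μ • w) → τ ≤ μ) : (A - τ • 1).PosSemidef := by
  refine Matrix.le_iff.mp ?_
  rw [← Algebra.algebraMap_eq_smul_one, algebraMap_le_iff_le_spectrum hA.isSelfAdjoint]
  intro μ hμ
  rw [← Matrix.spectrum_toLin', ← Module.End.hasEigenvalue_iff_mem_spectrum] at hμ
  obtain ⟨w, hw⟩ := hμ.exists_hasEigenvector
  exact hτ μ ⟨w, hw.2, by simpa using hw.apply_eq_smul⟩

lemma SimpleGraph.adjMatrix_add_smul_compl_apply {V : Type*} [DecidableEq V] (G : SimpleGraph V)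
    [DecidableRel G.Adj] (b : ℝ) (i j : V) :
    (G.adjMatrix ℝ + b • (of (fun _ _ => 1) - 1 - G.adjMatrix ℝ) : Matrix V V ℝ) i j =
      if i = j then 0 else if G.Adj i j then 1 else b := by
  by_cases hij : i = j
  · simp [hij]
  · by_cases h : G.Adj i j <;> simp [hij, h]

theorem stmt_4_general (n : ℕ) (G : SimpleGraph (Fin n)) [DecidableRel G.Adj]
    (A : Matrix (Fin n) (Fin n) ℝ) (hA : A = G.adjMatrix ℝ)
    (τ₁ : ℝ)
    (hτmin : ∀ μ : ℝ, (∃ w ≠ 0, A *ᵥ w = μ • w) → τ₁ ≤ μ)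
    (hτ : τ₁ < -1)
    (b : ℝ) (hb : b = τ₁ / (τ₁ + 1))
    (J : Matrix (Fin n) (Fin n) ℝ) (hJ : J = Matrix.of fun _ _ => (1 : ℝ))
    (M : Matrix (Fin n) (Fin n) ℝ) (hM : M = A + b • (J - 1 - A))
    (P : Matrix (Fin n) (Fin n) ℝ) (hP : P = 1 - (n : ℝ)⁻¹ • J) :
    (∀ i, M i i = 0) ∧ (∀ i j, i ≠ j → 0 < M i j) ∧
    (-(P * M * P)).PosSemidef ∧
    (∃ x : Fin n → EuclideanSpace ℝ (Fin n),
        ∀ i j, M i j = dist (x i) (x j) ^ 2) := by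
  have hτ1 : τ₁ + 1 < 0 := by linarith
  have hb0 : 0 < b := hb ▸ div_pos_of_neg_of_neg (by linarith) hτ1
  have hb1eq : b - 1 = -1 / (τ₁ + 1) := by rw [hb, div_sub_one hτ1.ne]; ring
  have hb1 : 0 ≤ b - 1 := hb1eq ▸ div_nonneg_of_nonpos (by norm_num) hτ1.le
  have hbτ : (b - 1) * τ₁ = -b := by rw [hb1eq, hb]; ring
  have hMij (i j) : M i j = if i = j then 0 else if G.Adj i j then 1 else b := by
    rw [hM, hA, hJ, G.adjMatrix_add_smul_compl_apply]
  have hdiag (i) : M i i = 0 := by simp [hMij]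
  have hoff (i j) (hij : i ≠ j) : 0 < M i j := by
    rw [hMij, if_neg hij]; split_ifs <;> positivity
  have hMsymm : Mᵀ = M := by ext i j; simp [hMij, eq_comm, G.adj_comm]
  have hPc : P = centeringMatrix (Fin n) := by rw [hP, hJ, centeringMatrix, Fintype.card_fin]
  have hnegM : -M = (b - 1) • (A - τ₁ • 1) + (-b) • J := by
    rw [hM, smul_sub (b - 1), smul_smul, hbτ]; module
  have hPSD : (-(P * M * P)).PosSemidef := by
    rw [← neg_mul, ← mul_neg, hnegM, hPc, hJ, centeringMatrix_mul_add_smul_allOnes_mul]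
    exact posSemidef_centeringMatrix_mul_mul
      (((hA ▸ G.isHermitian_adjMatrix ℝ).posSemidef_sub_smul_one hτmin).smul hb1)
  refine ⟨hdiag, hoff, hPSD, ?_⟩
  exact exists_dist_sq_eq_of_posSemidef_neg_centeringMatrix_mul_mul hMsymm hdiag (hPc ▸ hPSD)

theorem stmt_4 (n : ℕ) (hn : 0 < n) (G : SimpleGraph (Fin n)) [DecidableRel G.Adj]
    (A : Matrix (Fin n) (Fin n) ℝ) (hA : A = G.adjMatrix ℝ)
    (τ₁ : ℝ)
    (hτeig : ∃ w ≠ 0, A *ᵥ w = τ₁ • w)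
    (hτmin : ∀ μ : ℝ, (∃ w ≠ 0, A *ᵥ w = μ • w) → τ₁ ≤ μ)
    (hτ : τ₁ < -1)
    (b : ℝ) (hb : b = τ₁ / (τ₁ + 1))
    (J : Matrix (Fin n) (Fin n) ℝ) (hJ : J = Matrix.of fun _ _ => (1 : ℝ))
    (M : Matrix (Fin n) (Fin n) ℝ) (hM : M = A + b • (J - 1 - A))
    (P : Matrix (Fin n) (Fin n) ℝ) (hP : P = 1 - (n : ℝ)⁻¹ • J) :
    (∀ i, M i i = 0) ∧ (∀ i j, i ≠ j → 0 < M i j) ∧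
    (-(P * M * P)).PosSemidef ∧
    (∃ x : Fin n → EuclideanSpace ℝ (Fin n),
        ∀ i j, M i j = dist (x i) (x j) ^ 2) :=
  stmt_4_general n G A hA τ₁ hτmin hτ b hb J hJ M hM P hP
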